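/- If (A, φ) is the orthogonal direct sum of alternate modules (A₁, φ₁) and (A₂, φ₂), and both summands are subsymplectic, then (A, φ) is subsymplectic. -/
import Mathlib


/-- An alternate module `(A, φ)` is *subsymplectic* if it embeds, preserving the form,
into the standard symplectic module `B × Hom(B, ℚ/ℤ)` for some finite abelian group `B`
with `|B| = √(|A| * |K_φ|)`. -/
def Subsymplectic {A : Type u} [AddCommGroup A] [Fintype A]
    (φ : A → A → AddCircle (1 : ℚ)) : Prop :=
  ∃ (B : Type u) (_ : AddCommGroup B) (_ : Fintype B),
    Nat.card B ^ 2 = Nat.card A * Nat.card {a : A | ∀ b : A, φ a b = 0} ∧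
    ∃ ι : A →+ B × (B →+ AddCircle (1 : ℚ)), Function.Injective ι ∧
      ∀ a a' : A, φ a a' = (ι a').2 (ι a).1 - (ι a).2 (ι a').1

/-- An orthogonal sum of subsymplectic alternate modules is subsymplectic. -/
theorem orthogonal_sum_subsymplectic
    {A₁ : Type u} [AddCommGroup A₁] [Fintype A₁]
    {A₂ : Type u} [AddCommGroup A₂] [Fintype A₂]
    (φ₁ : A₁ → A₁ → AddCircle (1 : ℚ)) (φ₂ : A₂ → A₂ → AddCircle (1 : ℚ))
    (hL₁ : ∀ a b c : A₁, φ₁ (a + b) c = φ₁ a c + φ₁ b c)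
    (hR₁ : ∀ a b c : A₁, φ₁ a (b + c) = φ₁ a b + φ₁ a c)
    (halt₁ : ∀ a : A₁, φ₁ a a = 0)
    (hL₂ : ∀ a b c : A₂, φ₂ (a + b) c = φ₂ a c + φ₂ b c)
    (hR₂ : ∀ a b c : A₂, φ₂ a (b + c) = φ₂ a b + φ₂ a c)
    (halt₂ : ∀ a : A₂, φ₂ a a = 0)
    (Φ : A₁ × A₂ → A₁ × A₂ → AddCircle (1 : ℚ))
    (hΦ : ∀ a b : A₁ × A₂, Φ a b = φ₁ a.1 b.1 + φ₂ a.2 b.2)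
    (h₁ : Subsymplectic φ₁) (h₂ : Subsymplectic φ₂) :
    Subsymplectic Φ := by
  obtain ⟨B₁, _, _, hcard₁, ι₁, hinj₁, hform₁⟩ := h₁
  obtain ⟨B₂, _, _, hcard₂, ι₂, hinj₂, hform₂⟩ := h₂
  have hz₁ : ∀ a : A₁, φ₁ a 0 = 0 := by
    intro a
    have := hR₁ a 0 0
    rw [add_zero] at this
    exact (left_eq_add.mp this)
  have hz₂ : ∀ a : A₂, φ₂ a 0 = 0 := by
    intro a
    have := hR₂ a 0 0
    rw [add_zero] at this
    exact (left_eq_add.mp this)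
  refine ⟨B₁ × B₂, inferInstance, inferInstance, ?_, ?_⟩
  · -- cardinality
    have hK : Nat.card {a : A₁ × A₂ | ∀ b : A₁ × A₂, Φ a b = 0}
        = Nat.card {a : A₁ | ∀ b : A₁, φ₁ a b = 0}
          * Nat.card {a : A₂ | ∀ b : A₂, φ₂ a b = 0} := by
      rw [← Nat.card_prod]
      refine Nat.card_congr ?_
      refine (Equiv.subtypeEquivRight ?_).trans Equiv.subtypeProdEquivProd
      intro a
      constructor
      · intro h
        constructor
        · intro b
          have := h (b, 0)
          rw [hΦ] at this
          simpa [hz₂] using this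
        · intro b
          have := h (0, b)
          rw [hΦ] at this
          simpa [hz₁] using this
      · rintro ⟨h1, h2⟩ b
        rw [hΦ, h1 b.1, h2 b.2, add_zero]
    rw [Nat.card_prod, Nat.card_prod, hK, mul_pow]
    rw [hcard₁, hcard₂]; ring
  · -- the embedding
    set e₁ : (B₁ × B₂) →+ B₁ := AddMonoidHom.fst B₁ B₂
    set e₂ : (B₁ × B₂) →+ B₂ := AddMonoidHom.snd B₁ B₂
    refine ⟨AddMonoidHom.mk' (fun a =>
      (((ι₁ a.1).1, (ι₂ a.2).1),
        ((ι₁ a.1).2.comp e₁) + ((ι₂ a.2).2.comp e₂))) ?_, ?_, ?_⟩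
    · intro a b
      ext <;> simp <;> abel
    · intro a b hab
      simp only [AddMonoidHom.mk'_apply, Prod.mk.injEq] at hab
      obtain ⟨⟨h11, h21⟩, hf⟩ := hab
      have h12 : (ι₁ a.1).2 = (ι₁ b.1).2 := by
        ext x
        have := congrArg (fun f => f (x, 0)) (congrArg DFunLike.coe hf)
        simpa [e₁, e₂] using this
      have h22 : (ι₂ a.2).2 = (ι₂ b.2).2 := by
        ext x
        have := congrArg (fun f => f (0, x)) (congrArg DFunLike.coe hf)
        simpa [e₁, e₂] using this
      have e1 : ι₁ a.1 = ι₁ b.1 := Prod.ext h11 h12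
      have e2 : ι₂ a.2 = ι₂ b.2 := Prod.ext h21 h22
      exact Prod.ext (hinj₁ e1) (hinj₂ e2)
    · intro a a'
      simp only [AddMonoidHom.mk'_apply, AddMonoidHom.add_apply,
        AddMonoidHom.comp_apply]
      rw [hΦ, hform₁ a.1 a'.1, hform₂ a.2 a'.2]
      simp [e₁, e₂]
      abel
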